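/- arXiv:2409.08774 — 2 statements merged into one kernel-verified Lean document; each statement's English description precedes it below -/
import Mathlib

section
/- Let K/ℚ_p be a totally ramified extension of degree n with uniformizer θ, and write ζ = a_0 + a_1 θ + a_2 θ² + ⋯ + a_{n−1} θ^{n−1} with a_i ∈ ℤ_p. Then ℤ_p[ζ] = ℤ_p[θ] (= O_K) if and only if a_1 is a unit in ℤ_p (i.e., a_1 ≢ 0 mod p). -/
open Polynomial Finset IsUltrametricDist

set_option linter.unusedSectionVars false

section stmt13aux

variable {p : ℕ} [Fact p.Prime] {K : Type*} [NormedField K]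
    [Algebra ℚ_[p] K] [FiniteDimensional ℚ_[p] K] [IsUltrametricDist K]

private lemma aux_hP : (1:ℝ) < (p:ℝ) := by
  exact_mod_cast (Fact.out : p.Prime).one_lt

private lemma aux_smul_norm (hext : ∀ x : ℚ_[p], ‖algebraMap ℚ_[p] K x‖ = ‖x‖)
    (c : ℚ_[p]) (x : K) : ‖c • x‖ = ‖c‖ * ‖x‖ := by
  rw [Algebra.smul_def, norm_mul, hext]

private lemma aux_term_norm (hext : ∀ x : ℚ_[p], ‖algebraMap ℚ_[p] K x‖ = ‖x‖)
    {n : ℕ} (π : K) (hπ : ‖π‖ = (p:ℝ) ^ (-(1:ℝ)/(n:ℝ))) {c : ℚ_[p]} (hc : c ≠ 0) (i : ℕ) :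
    ‖c • π ^ i‖ = (p:ℝ) ^ ((-c.valuation : ℝ) + (-(1:ℝ)/(n:ℝ)) * i) := by
  have hP0 : (0:ℝ) < p := lt_trans one_pos aux_hP
  rw [aux_smul_norm hext, norm_pow, hπ, Padic.norm_eq_zpow_neg_valuation hc,
    ← Real.rpow_natCast ((p:ℝ) ^ (-(1:ℝ)/(n:ℝ))) i, ← Real.rpow_mul hP0.le,
    ← Real.rpow_intCast, ← Real.rpow_add hP0]
  push_cast
  ring_nf

private lemma aux_distinct (hext : ∀ x : ℚ_[p], ‖algebraMap ℚ_[p] K x‖ = ‖x‖)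
    {n : ℕ} (π : K) (hπ : ‖π‖ = (p:ℝ) ^ (-(1:ℝ)/(n:ℝ))) (hn : 1 < n) {i j : Fin n}
    {c d : ℚ_[p]} (hc : c ≠ 0) (hd : d ≠ 0)
    (h : ‖c • π ^ (i:ℕ)‖ = ‖d • π ^ (j:ℕ)‖) : i = j := by
  rw [aux_term_norm hext π hπ hc, aux_term_norm hext π hπ hd] at h
  have hexp : (-c.valuation : ℝ) + (-(1:ℝ)/(n:ℝ)) * (i:ℕ)
      = (-d.valuation : ℝ) + (-(1:ℝ)/(n:ℝ)) * (j:ℕ) :=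
    le_antisymm ((Real.rpow_le_rpow_left_iff aux_hP).mp h.le)
      ((Real.rpow_le_rpow_left_iff aux_hP).mp h.ge)
  have hn0 : (n:ℝ) ≠ 0 := by positivity
  have hR : (c.valuation : ℝ) * n + ((i:ℕ):ℝ) = (d.valuation:ℝ) * n + ((j:ℕ):ℝ) := by
    field_simp at hexp
    linarith
  have hZ : c.valuation * n + ((i:ℕ):ℤ) = d.valuation * n + ((j:ℕ):ℤ) := by
    exact_mod_cast hR
  have hdvd : (n:ℤ) ∣ ((i:ℕ):ℤ) - ((j:ℕ):ℤ) := ⟨d.valuation - c.valuation, by linarith⟩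
  have habs : |((i:ℕ):ℤ) - ((j:ℕ):ℤ)| < n := by
    have := i.isLt; have := j.isLt
    rw [abs_sub_lt_iff]; omega
  have := Int.eq_zero_of_abs_lt_dvd hdvd habs
  exact Fin.ext (by omega)

private lemma aux_coord (hext : ∀ x : ℚ_[p], ‖algebraMap ℚ_[p] K x‖ = ‖x‖)
    {n : ℕ} (hn : 1 < n) (π : K) (hπ : ‖π‖ = (p:ℝ) ^ (-(1:ℝ)/(n:ℝ)))
    (c : Fin n → ℚ_[p]) (j : Fin n) :
    ‖c j • π ^ (j:ℕ)‖ ≤ ‖∑ i, c i • π ^ (i:ℕ)‖ := by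
  set g : Fin n → K := fun i => c i • π ^ (i:ℕ) with hg
  by_contra hlt
  push_neg at hlt
  obtain ⟨j0, -, hj0⟩ := Finset.exists_max_image Finset.univ (fun i => ‖g i‖)
    ⟨j, Finset.mem_univ j⟩
  have hxlt : ‖∑ i, g i‖ < ‖g j0‖ := lt_of_lt_of_le hlt (hj0 j (mem_univ j))
  have hj0pos : 0 < ‖g j0‖ := lt_of_le_of_lt (norm_nonneg _) hxlt
  have hcj0 : c j0 ≠ 0 := by
    intro h0
    rw [hg] at hj0pos
    simp [h0] at hj0pos
  haveI : Nontrivial (Fin n) := Fin.nontrivial_iff_two_le.mpr hn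
  obtain ⟨k, hk⟩ := exists_ne j0
  have hne : (Finset.univ.erase j0).Nonempty := ⟨k, Finset.mem_erase.mpr ⟨hk, mem_univ k⟩⟩
  have hstrict : ∀ i ∈ Finset.univ.erase j0, ‖g i‖ < ‖g j0‖ := by
    intro i hi
    rcases eq_or_ne (c i) 0 with h0 | h0
    · simpa [hg, h0] using hj0pos
    · exact lt_of_le_of_ne (hj0 i (mem_univ i))
        (fun h => (Finset.mem_erase.mp hi).1 (aux_distinct hext π hπ hn h0 hcj0 h))
  have hsum : ‖∑ i ∈ Finset.univ.erase j0, g i‖ < ‖g j0‖ :=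
    lt_of_le_of_lt (hne.norm_sum_le_sup'_norm g) ((Finset.sup'_lt_iff hne).mpr hstrict)
  have hrepr : g j0 = (∑ i, g i) + -(∑ i ∈ Finset.univ.erase j0, g i) := by
    rw [← Finset.add_sum_erase _ g (mem_univ j0)]
    ring
  have : ‖g j0‖ < ‖g j0‖ := by
    calc ‖g j0‖ = ‖(∑ i, g i) + -(∑ i ∈ Finset.univ.erase j0, g i)‖ := by rw [← hrepr]
    _ ≤ max ‖∑ i, g i‖ ‖-(∑ i ∈ Finset.univ.erase j0, g i)‖ := norm_add_le_max _ _
    _ < ‖g j0‖ := by rw [norm_neg]; exact max_lt hxlt hsum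
  exact lt_irrefl _ this

private lemma aux_ball (hext : ∀ x : ℚ_[p], ‖algebraMap ℚ_[p] K x‖ = ‖x‖)
    {n : ℕ} (hn : 1 < n) (hdeg : Module.finrank ℚ_[p] K = n)
    (π : K) (hπ : ‖π‖ = (p:ℝ) ^ (-(1:ℝ)/(n:ℝ))) {x : K} (hx : ‖x‖ ≤ 1) :
    ∃ q : Polynomial ℤ_[p],
      Polynomial.eval₂ ((algebraMap ℚ_[p] K).comp (PadicInt.Coe.ringHom)) π q = x := by
  have hP : (1:ℝ) < (p:ℝ) := aux_hP
  have hP0 : (0:ℝ) < p := lt_trans one_pos hP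
  have hr0 : (0:ℝ) < (p:ℝ) ^ (-(1:ℝ)/(n:ℝ)) := Real.rpow_pos_of_pos hP0 _
  have hπ0 : π ≠ 0 := by
    intro h0
    rw [h0, norm_zero] at hπ
    exact lt_irrefl _ (hπ ▸ hr0)
  haveI : Nonempty (Fin n) := ⟨⟨0, by omega⟩⟩
  have li : LinearIndependent ℚ_[p] (fun i : Fin n => π ^ (i:ℕ)) := by
    rw [Fintype.linearIndependent_iff]
    intro c hc j
    have h := aux_coord hext hn π hπ c j
    rw [hc, norm_zero] at h
    rcases smul_eq_zero.mp (norm_le_zero_iff.mp h) with h | h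
    · exact h
    · exact absurd h (pow_ne_zero _ hπ0)
  let b := basisOfLinearIndependentOfCardEqFinrank li (by simp [hdeg])
  have hb : ∀ i : Fin n, b i = π ^ (i:ℕ) := fun i => by
    simp [b, coe_basisOfLinearIndependentOfCardEqFinrank]
  set c : Fin n → ℚ_[p] := fun i => b.repr x i with hcdef
  have hxe : ∑ i, c i • π ^ (i:ℕ) = x := by
    conv_rhs => rw [← b.sum_repr x]
    exact Finset.sum_congr rfl fun i _ => by rw [hb]
  have hsmall : ∀ i, ‖c i‖ ≤ 1 := by
    intro i
    by_contra h1
    push_neg at h1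
    have hc0 : c i ≠ 0 := by
      intro h0; rw [h0, norm_zero] at h1; linarith
    have hterm : ‖c i • π ^ (i:ℕ)‖ ≤ 1 := by
      have h := aux_coord hext hn π hπ c i
      rw [hxe] at h
      exact le_trans h hx
    -- ‖c i‖ ≥ p
    obtain ⟨v, hv⟩ : ∃ v : ℤ, ‖c i‖ = (p:ℝ) ^ (-v) := ⟨(c i).valuation, Padic.norm_eq_zpow_neg_valuation hc0⟩
    have hv1 : 1 ≤ -v := by
      by_contra hv1
      push_neg at hv1
      have : -v ≤ 0 := by omega
      have : ‖c i‖ ≤ 1 := by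
        rw [hv]
        calc (p:ℝ) ^ (-v) ≤ (p:ℝ) ^ (0:ℤ) := zpow_le_zpow_right₀ hP.le this
        _ = 1 := by norm_num
      linarith
    have hPle : (p:ℝ) ≤ ‖c i‖ := by
      rw [hv]
      calc (p:ℝ) = (p:ℝ) ^ (1:ℤ) := by norm_num
      _ ≤ (p:ℝ) ^ (-v) := zpow_le_zpow_right₀ hP.le hv1
    -- piⁱ norm > p⁻¹
    have hgt : (p:ℝ)⁻¹ < ((p:ℝ) ^ (-(1:ℝ)/(n:ℝ))) ^ (i:ℕ) := by
      rw [← Real.rpow_natCast ((p:ℝ) ^ (-(1:ℝ)/(n:ℝ))) (i:ℕ), ← Real.rpow_mul hP0.le,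
        ← Real.rpow_neg_one (p:ℝ)]
      apply (Real.rpow_lt_rpow_left_iff hP).mpr
      have hi : ((i:ℕ):ℝ) < (n:ℝ) := by exact_mod_cast i.isLt
      have hn0 : (0:ℝ) < n := by positivity
      have h3 : ((i:ℕ):ℝ)/(n:ℝ) < 1 := (div_lt_one hn0).mpr hi
      have h4 : (-1:ℝ)/(n:ℝ) * ((i:ℕ):ℝ) = -(((i:ℕ):ℝ)/(n:ℝ)) := by ring
      rw [h4]
      linarith
    rw [aux_smul_norm hext, norm_pow, hπ] at hterm
    have h5 : (p:ℝ) * (p:ℝ)⁻¹ < ‖c i‖ * ((p:ℝ) ^ (-(1:ℝ)/(n:ℝ))) ^ (i:ℕ) :=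
      mul_lt_mul' hPle hgt (inv_nonneg.mpr hP0.le) (lt_of_lt_of_le hP0 hPle)
    rw [mul_inv_cancel₀ (ne_of_gt hP0)] at h5
    linarith
  set d : Fin n → ℤ_[p] := fun i => ⟨c i, hsmall i⟩ with hd
  refine ⟨∑ i : Fin n, Polynomial.C (d i) * Polynomial.X ^ (i:ℕ), ?_⟩
  rw [Polynomial.eval₂_finset_sum]
  rw [← hxe]
  refine Finset.sum_congr rfl fun i _ => ?_
  rw [Polynomial.eval₂_mul, Polynomial.eval₂_C, Polynomial.eval₂_X_pow, Algebra.smul_def]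
  rfl

private lemma aux_approx (hext : ∀ x : ℚ_[p], ‖algebraMap ℚ_[p] K x‖ = ‖x‖)
    (a0 : ℤ_[p]) {δ : K} {s : ℝ} (hs0 : 0 ≤ s) (hs1 : s ≤ 1) (hδ : ‖δ‖ ≤ s)
    (q : Polynomial ℤ_[p]) :
    ∃ c : ℤ_[p],
      ‖Polynomial.eval₂ ((algebraMap ℚ_[p] K).comp (PadicInt.Coe.ringHom))
          (algebraMap ℚ_[p] K (a0 : ℚ_[p]) + δ) q - algebraMap ℚ_[p] K (c : ℚ_[p])‖ ≤ s := by
  set f := (algebraMap ℚ_[p] K).comp (PadicInt.Coe.ringHom) with hf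
  set α := algebraMap ℚ_[p] K (a0 : ℚ_[p]) with hα
  have hint : ∀ b : ℤ_[p], ‖algebraMap ℚ_[p] K (b : ℚ_[p])‖ ≤ 1 := fun b => by
    rw [hext]; exact b.2
  have hα1 : ‖α‖ ≤ 1 := hint a0
  have hαδ : ‖α + δ‖ ≤ 1 := le_trans (norm_add_le_max _ _) (max_le hα1 (hδ.trans hs1))
  have hpow : ∀ k : ℕ, ‖(α+δ)^k - α^k‖ ≤ s := by
    intro k
    induction k with
    | zero => simpa using hs0
    | succ k ih =>
      have hre : (α+δ)^(k+1) - α^(k+1) = (α+δ) * ((α+δ)^k - α^k) + δ * α^k := by ring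
      rw [hre]
      refine le_trans (norm_add_le_max _ _) (max_le ?_ ?_)
      · rw [norm_mul]
        calc ‖α+δ‖ * ‖(α+δ)^k - α^k‖ ≤ 1 * s := mul_le_mul hαδ ih (norm_nonneg _) zero_le_one
        _ = s := one_mul s
      · rw [norm_mul, norm_pow]
        calc ‖δ‖ * ‖α‖^k ≤ s * 1 :=
          mul_le_mul hδ (pow_le_one₀ (norm_nonneg _) hα1) (by positivity) hs0
        _ = s := mul_one s
  induction q using Polynomial.induction_on' with
  | monomial k b =>
    refine ⟨b * a0 ^ k, ?_⟩
    rw [Polynomial.eval₂_monomial]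
    have hca : algebraMap ℚ_[p] K ((b * a0 ^ k : ℤ_[p]) : ℚ_[p]) = f b * α ^ k := by
      show algebraMap ℚ_[p] K ((b * a0 ^ k : ℤ_[p]) : ℚ_[p])
        = algebraMap ℚ_[p] K (b : ℚ_[p]) * (algebraMap ℚ_[p] K (a0 : ℚ_[p])) ^ k
      rw [← map_pow, ← map_mul]
      congr 1
    have hfb : f b * (α+δ)^k - algebraMap ℚ_[p] K ((b * a0 ^ k : ℤ_[p]) : ℚ_[p])
        = f b * ((α+δ)^k - α^k) := by
      rw [hca]; ring
    rw [hfb, norm_mul]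
    calc ‖f b‖ * ‖(α+δ)^k - α^k‖ ≤ 1 * s :=
      mul_le_mul (hint b) (hpow k) (norm_nonneg _) zero_le_one
    _ = s := one_mul s
  | add q1 q2 ih1 ih2 =>
    obtain ⟨c1, hc1⟩ := ih1
    obtain ⟨c2, hc2⟩ := ih2
    refine ⟨c1 + c2, ?_⟩
    rw [Polynomial.eval₂_add]
    have hre : eval₂ f (α + δ) q1 + eval₂ f (α + δ) q2
        - algebraMap ℚ_[p] K ((c1 + c2 : ℤ_[p]) : ℚ_[p])
        = (eval₂ f (α + δ) q1 - algebraMap ℚ_[p] K (c1 : ℚ_[p]))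
          + (eval₂ f (α + δ) q2 - algebraMap ℚ_[p] K (c2 : ℚ_[p])) := by
      have : algebraMap ℚ_[p] K ((c1 + c2 : ℤ_[p]) : ℚ_[p])
          = algebraMap ℚ_[p] K (c1 : ℚ_[p]) + algebraMap ℚ_[p] K (c2 : ℚ_[p]) := by
        rw [← map_add]
        congr 1
      rw [this]
      ring
    rw [hre]
    exact le_trans (norm_add_le_max _ _) (max_le hc1 hc2)

private lemma aux_small (c : ℤ_[p]) (h : ‖c‖ < 1) : ‖(c : ℚ_[p])‖ ≤ (p:ℝ)⁻¹ := by
  obtain ⟨y, hy⟩ := (PadicInt.norm_lt_one_iff_dvd _).mp h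
  rw [hy]
  push_cast
  rw [norm_mul, Padic.norm_p]
  calc (p:ℝ)⁻¹ * ‖(y : ℚ_[p])‖ ≤ (p:ℝ)⁻¹ * 1 := by
        refine mul_le_mul_of_nonneg_left y.2 (by positivity)
  _ = (p:ℝ)⁻¹ := mul_one _

end stmt13aux

theorem stmt13 {p : ℕ} [Fact p.Prime] {K : Type*} [NormedField K]
    [Algebra ℚ_[p] K] [FiniteDimensional ℚ_[p] K] [IsUltrametricDist K]
    (hext : ∀ x : ℚ_[p], ‖algebraMap ℚ_[p] K x‖ = ‖x‖)
    {n : ℕ} (hn : 1 < n) (hdeg : Module.finrank ℚ_[p] K = n)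
    -- θ is a uniformizer of the totally ramified extension K
    (θ : K) (hθ : ‖θ‖ = (p : ℝ) ^ (-(1 : ℝ) / (n : ℝ)))
    (a : Fin n → ℤ_[p]) (ζ : K)
    (hζ : ζ = ∑ i, ((a i : ℚ_[p])) • θ ^ (i : ℕ)) :
    ({x : K | ∃ q : Polynomial ℤ_[p],
        Polynomial.eval₂ ((algebraMap ℚ_[p] K).comp (PadicInt.Coe.ringHom)) ζ q = x} =
     {x : K | ∃ q : Polynomial ℤ_[p],
        Polynomial.eval₂ ((algebraMap ℚ_[p] K).comp (PadicInt.Coe.ringHom)) θ q = x}) ↔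
    IsUnit (a ⟨1, hn⟩) := by
  set f := (algebraMap ℚ_[p] K).comp (PadicInt.Coe.ringHom) with hf
  have hP : (1:ℝ) < (p:ℝ) := by exact_mod_cast (Fact.out : p.Prime).one_lt
  have hP0 : (0:ℝ) < p := lt_trans one_pos hP
  set r : ℝ := (p:ℝ) ^ (-(1:ℝ)/(n:ℝ)) with hr
  have hn0 : (0:ℝ) < n := by
    have : 0 < n := by omega
    exact_mod_cast this
  have hr0 : 0 < r := Real.rpow_pos_of_pos hP0 _
  have hr1 : r < 1 := Real.rpow_lt_one_of_one_lt_of_neg hP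
    (div_neg_of_neg_of_pos (by norm_num) hn0)
  have hrr0 : 0 < r * r := by positivity
  have hr2lt : r * r < r := by nlinarith
  set i0 : Fin n := ⟨0, by omega⟩ with hi0
  set i1 : Fin n := ⟨1, hn⟩ with hi1
  have hv0 : (i0 : ℕ) = 0 := rfl
  have hv1 : (i1 : ℕ) = 1 := rfl
  have hne10 : i1 ≠ i0 := by
    intro h
    rw [Fin.ext_iff, hv0, hv1] at h
    omega
  -- p⁻¹ bounds
  have hp_le_r : (p:ℝ)⁻¹ ≤ r := by
    rw [← Real.rpow_neg_one (p:ℝ), hr]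
    apply (Real.rpow_le_rpow_left_iff hP).mpr
    rw [neg_div, neg_le_neg_iff, div_le_one hn0]
    exact_mod_cast hn.le
  have hp_le_rr : (p:ℝ)⁻¹ ≤ r * r := by
    rw [← Real.rpow_neg_one (p:ℝ), hr, ← Real.rpow_add hP0]
    apply (Real.rpow_le_rpow_left_iff hP).mpr
    have h2n : (2:ℝ) ≤ n := by exact_mod_cast hn
    have : -(1:ℝ)/n + -(1:ℝ)/n = -((2:ℝ)/n) := by ring
    rw [this, neg_le_neg_iff, div_le_one hn0]
    exact h2n
  -- term norms
  have hterm : ∀ i : Fin n, ‖((a i : ℚ_[p])) • θ ^ (i:ℕ)‖ = ‖(a i : ℚ_[p])‖ * r ^ (i:ℕ) := by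
    intro i
    rw [aux_smul_norm hext, norm_pow, hθ]
  have hrpow : ∀ m : ℕ, 2 ≤ m → r ^ m ≤ r * r := by
    intro m hm
    calc r ^ m ≤ r ^ 2 := pow_le_pow_of_le_one hr0.le hr1.le hm
    _ = r * r := sq r
  have hterm_le : ∀ i : Fin n, i ≠ i0 → i ≠ i1 → ‖((a i : ℚ_[p])) • θ ^ (i:ℕ)‖ ≤ r * r := by
    intro i h0 h1
    have h0' : (i:ℕ) ≠ 0 := fun h => h0 (Fin.ext (by rw [hv0, h]))
    have h1' : (i:ℕ) ≠ 1 := fun h => h1 (Fin.ext (by rw [hv1, h]))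
    have hival : 2 ≤ (i:ℕ) := by omega
    rw [hterm i]
    calc ‖(a i : ℚ_[p])‖ * r ^ (i:ℕ) ≤ 1 * (r * r) :=
      mul_le_mul (a i).2 (hrpow _ hival) (by positivity) one_pos.le
    _ = r * r := one_mul _
  -- decomposition of ζ
  have hsmul0 : ((a i0 : ℚ_[p])) • θ ^ ((i0:ℕ)) = algebraMap ℚ_[p] K ((a i0 : ℚ_[p])) := by
    rw [hv0, pow_zero, Algebra.algebraMap_eq_smul_one]
  have hsum0 : ζ - algebraMap ℚ_[p] K ((a i0 : ℚ_[p]))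
      = ∑ i ∈ univ.erase i0, ((a i : ℚ_[p])) • θ ^ (i:ℕ) := by
    rw [hζ, ← Finset.add_sum_erase _ _ (mem_univ i0), hsmul0]
    ring
  have hδsplit : ∑ i ∈ univ.erase i0, ((a i : ℚ_[p])) • θ ^ (i:ℕ)
      = ((a i1 : ℚ_[p])) • θ ^ (i1:ℕ)
        + ∑ i ∈ (univ.erase i0).erase i1, ((a i : ℚ_[p])) • θ ^ (i:ℕ) :=
    (Finset.add_sum_erase _ _ (mem_erase.mpr ⟨hne10, mem_univ _⟩)).symm
  have hrest : ‖∑ i ∈ (univ.erase i0).erase i1, ((a i : ℚ_[p])) • θ ^ (i:ℕ)‖ ≤ r * r := by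
    apply norm_sum_le_of_forall_le_of_nonneg hrr0.le
    intro i hi
    obtain ⟨h1, h0m⟩ := mem_erase.mp hi
    obtain ⟨h0, -⟩ := mem_erase.mp h0m
    exact hterm_le i h0 h1
  -- ζ as polynomial in θ
  have hζθ : eval₂ f θ (∑ i : Fin n, C (a i) * X ^ (i:ℕ)) = ζ := by
    rw [hζ, eval₂_finset_sum]
    refine Finset.sum_congr rfl fun i _ => ?_
    rw [eval₂_mul, eval₂_C, eval₂_X_pow, Algebra.smul_def]
    rfl
  have hsub1 : {x : K | ∃ q : Polynomial ℤ_[p], eval₂ f ζ q = x}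
      ⊆ {x : K | ∃ q : Polynomial ℤ_[p], eval₂ f θ q = x} := by
    rintro x ⟨q, rfl⟩
    exact ⟨q.comp (∑ i : Fin n, C (a i) * X ^ (i:ℕ)), by rw [eval₂_comp, hζθ]⟩
  constructor
  · -- sets equal → a 1 unit
    intro hset
    by_contra hunit
    have ha1lt : ‖a i1‖ < 1 :=
      lt_of_le_of_ne (PadicInt.norm_le_one _) (fun h => hunit (PadicInt.isUnit_iff.mpr h))
    have ha1 : ‖(a i1 : ℚ_[p])‖ ≤ (p:ℝ)⁻¹ := aux_small _ ha1lt
    have hδle : ‖ζ - algebraMap ℚ_[p] K ((a i0 : ℚ_[p]))‖ ≤ r * r := by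
      rw [hsum0]
      apply norm_sum_le_of_forall_le_of_nonneg hrr0.le
      intro i hi
      rcases eq_or_ne i i1 with h | h
      · subst h
        rw [hterm i1, hv1, pow_one]
        calc ‖(a i1 : ℚ_[p])‖ * r ≤ (p:ℝ)⁻¹ * r := by
              exact mul_le_mul_of_nonneg_right ha1 hr0.le
        _ ≤ r * r := mul_le_mul_of_nonneg_right hp_le_r hr0.le
      · exact hterm_le i (mem_erase.mp hi).1 h
    have hθmem : θ ∈ {x : K | ∃ q : Polynomial ℤ_[p], eval₂ f ζ q = x} := by
      rw [hset]
      exact ⟨X, eval₂_X _ _⟩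
    obtain ⟨q, hq⟩ := hθmem
    obtain ⟨c, hc⟩ := aux_approx hext (a i0) hrr0.le (le_of_lt (lt_trans hr2lt hr1)) hδle q
    have hζeq : algebraMap ℚ_[p] K ((a i0 : ℚ_[p])) + (ζ - algebraMap ℚ_[p] K ((a i0 : ℚ_[p]))) = ζ := by
      ring
    rw [hζeq, hq] at hc
    -- now hc : ‖θ - algebraMap (c)‖ ≤ r * r
    rcases eq_or_lt_of_le (PadicInt.norm_le_one c) with h1 | h1
    · have hnc : ‖algebraMap ℚ_[p] K (c : ℚ_[p])‖ = 1 := by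
        rw [hext, ← PadicInt.norm_def]
        exact h1.symm ▸ rfl
      have : (1:ℝ) ≤ max r (r * r) := by
        calc (1:ℝ) = ‖algebraMap ℚ_[p] K (c : ℚ_[p])‖ := hnc.symm
        _ = ‖θ + -(θ - algebraMap ℚ_[p] K (c : ℚ_[p]))‖ := by ring_nf
        _ ≤ max ‖θ‖ ‖-(θ - algebraMap ℚ_[p] K (c : ℚ_[p]))‖ := norm_add_le_max _ _
        _ ≤ max r (r * r) := by
            rw [norm_neg, hθ]
            exact max_le_max le_rfl hc
      have : (1:ℝ) ≤ r := le_trans this (max_le le_rfl hr2lt.le)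
      linarith
    · have hcc : ‖(c : ℚ_[p])‖ ≤ r * r := le_trans (aux_small c h1) hp_le_rr
      have : r ≤ r * r := by
        calc r = ‖θ‖ := hθ.symm
        _ = ‖(θ - algebraMap ℚ_[p] K (c : ℚ_[p])) + algebraMap ℚ_[p] K (c : ℚ_[p])‖ := by ring_nf
        _ ≤ max ‖θ - algebraMap ℚ_[p] K (c : ℚ_[p])‖ ‖algebraMap ℚ_[p] K (c : ℚ_[p])‖ :=
            norm_add_le_max _ _
        _ ≤ r * r := max_le hc (by rw [hext]; exact hcc)
      linarith
  · -- a 1 unit → sets equal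
    intro hunit
    set π : K := ζ - algebraMap ℚ_[p] K ((a i0 : ℚ_[p])) with hπdef
    have ha1 : ‖(a i1 : ℚ_[p])‖ = 1 := by
      rw [← PadicInt.norm_def]
      exact PadicInt.isUnit_iff.mp hunit
    have ht1 : ‖((a i1 : ℚ_[p])) • θ ^ (i1:ℕ)‖ = r := by
      rw [hterm i1, ha1, hv1, pow_one, one_mul]
    have hπnorm : ‖π‖ = r := by
      rw [hsum0, hδsplit]
      rw [norm_add_eq_max_of_norm_ne_norm (by rw [ht1]; exact fun h => absurd (h ▸ hrest) (by linarith))]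
      rw [ht1]
      exact max_eq_left (le_trans hrest hr2lt.le)
    have hθball : ‖θ‖ ≤ 1 := by rw [hθ]; exact hr1.le
    obtain ⟨q, hq⟩ := aux_ball hext hn hdeg π hπnorm hθball
    have hπζ : eval₂ f ζ (X - C (a i0)) = π := by
      rw [eval₂_sub, eval₂_X, eval₂_C, hπdef]
      rfl
    have hsub2 : {x : K | ∃ q : Polynomial ℤ_[p], eval₂ f θ q = x}
        ⊆ {x : K | ∃ q : Polynomial ℤ_[p], eval₂ f ζ q = x} := by
      rintro x ⟨q', rfl⟩
      exact ⟨(q'.comp q).comp (X - C (a i0)), by rw [eval₂_comp, hπζ, eval₂_comp, hq]⟩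
    exact Set.Subset.antisymm hsub1 hsub2
end

section
/- Let L = L(α_1, …, α_m) be a lattice in a finite extension K of ℚ_p with orthogonal basis satisfying |α_1|_p > |α_2|_p > ⋯ > |α_m|_p > |p·α_1|_p, and let β_1, …, β_m be any basis of the same lattice (related to the α's by a matrix in GL_m(ℤ_p)). Then at least one β_i satisfies |β_i|_p = |α_1|_p, and after subtracting suitable multiples c_i·β_1 with c_i ∈ {0,…,p−1} from the other β_j of maximal norm, some resulting vector β'_s has |β'_s|_p = λ_2 = |α_2|_p. -/
/-!
Write `β_j = ∑ B_{ji} α_i`; since `L(α) = L(β)` and the `α_i` are independent, `B ∈ GL_m(ℤ_p)`.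
Because the norms `‖α_i‖` are distinct and all exceed `‖p α_1‖`, the norm of `∑ a_i α_i` is
`‖α_j‖` for the first index `j` at which `a_j` is a unit, and at most `‖α_2‖` when `a_1` is not a
unit. Hence `λ_2 = ‖α_2‖`, and `β_{i₀}` has norm `λ_1` exactly when `B_{i₀1}` is a unit.
The reduction of `B` mod `p` is invertible, so its first two columns are not proportional: some
row `s` has `B_{s2} ≢ c B_{i₀2}` where `c ≡ B_{s1} / B_{i₀1}`. The coefficients of
`β_s - c β_{i₀}` are then a non-unit at `α_1` and a unit at `α_2`, so its norm is `‖α_2‖`.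
-/

open IsUltrametricDist Finset

theorem norm_sum_eq_of_forall_ne_lt {ι E : Type*} [DecidableEq ι] [SeminormedAddCommGroup E]
    [IsUltrametricDist E] {s : Finset ι} {f : ι → E} {j : ι} (hj : j ∈ s) (hf : ∀ i ∈ s, i ≠ j → ‖f i‖ < ‖f j‖) :
    ‖∑ i ∈ s, f i‖ = ‖f j‖ := by
  rw [← add_sum_erase s f hj]
  rcases (s.erase j).eq_empty_or_nonempty with hs | hs
  · simp [hs]
  have hrest : ‖∑ i ∈ s.erase j, f i‖ < ‖f j‖ :=
    (hs.norm_sum_le_sup'_norm f).trans_lt <|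
      (sup'_lt_iff hs).2 fun i hi => hf i (mem_of_mem_erase hi) (ne_of_mem_erase hi)
  rw [norm_add_eq_max_of_norm_ne_norm hrest.ne', max_eq_left hrest.le]

theorem IsBot.eq_of_lt_of_covBy {ι : Type*} [LinearOrder ι] {i₀ i₁ i : ι} (hbot : IsBot i₀)
    (hcov : i₀ ⋖ i₁) (hi : i < i₁) : i = i₀ :=
  (hcov.le_of_lt hi).antisymm (hbot i)

theorem Matrix.sum_smul_sum_smul {ι κ ν R M : Type*} [Fintype ι] [Fintype κ] [Semiring R]
    [AddCommMonoid M] [Module R M] (D : Matrix ν ι R) (B : Matrix ι κ R) (v : κ → M) (j : ν) :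
    ∑ i, D j i • ∑ k, B i k • v k = ∑ k, (D * B) j k • v k := by
  simp only [Matrix.mul_apply, smul_sum, smul_smul, sum_smul]
  exact sum_comm

theorem LinearIndependent.eq_one_of_forall_sum_smul_eq {ι R M : Type*} [Fintype ι]
    [DecidableEq ι] [Semiring R] [AddCommMonoid M] [Module R M] {v : ι → M}
    (hv : LinearIndependent R v) {C : Matrix ι ι R} (hC : ∀ j, ∑ k, C j k • v k = v j) : C = 1 := by
  ext j k
  exact Fintype.linearIndependent_iffₛ.1 hv (C j) (fun k => (1 : Matrix ι ι R) j k)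
    (by simp [hC j, Matrix.one_apply]) k

theorem Matrix.exists_mul_ne_mul_of_det_ne_zero {n R : Type*} [Fintype n] [DecidableEq n]
    [CommRing R] [IsDomain R] {M : Matrix n n R} (hM : M.det ≠ 0) {a b j : n} (hab : a ≠ b)
    (hj : M j a ≠ 0) : ∃ s, M s b * M j a ≠ M j b * M s a := by
  by_contra! h
  refine hM <| Matrix.exists_mulVec_eq_zero_iff.1
    ⟨Pi.single b (M j a) - Pi.single a (M j b), ?_, ?_⟩
  · intro h0
    exact hj (by simpa [hab.symm] using congrFun h0 b)
  · ext s
    simp only [Matrix.mulVec_sub, Matrix.mulVec_single, Pi.sub_apply, Pi.zero_apply,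
      Pi.smul_apply, Matrix.col_apply, op_smul_eq_mul]
    linear_combination h s

namespace PadicInt

variable {p : ℕ} [Fact p.Prime]

theorem toZMod_eq_zero_iff {x : ℤ_[p]} : toZMod x = 0 ↔ ‖x‖ < 1 := by
  rw [← RingHom.mem_ker, ker_toZMod, IsLocalRing.mem_maximalIdeal, mem_nonunits]

theorem toZMod_ne_zero_iff {x : ℤ_[p]} : toZMod x ≠ 0 ↔ ‖x‖ = 1 := by
  rw [ne_eq, toZMod_eq_zero_iff, not_lt, x.norm_le_one.ge_iff_eq', eq_comm]

theorem norm_le_inv_of_norm_lt_one {x : ℤ_[p]} (hx : ‖x‖ < 1) : ‖x‖ ≤ (p : ℝ)⁻¹ := by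
  obtain ⟨y, rfl⟩ := (norm_lt_one_iff_dvd x).1 hx
  rw [norm_mul, norm_p]
  exact mul_le_of_le_one_right (by positivity) y.norm_le_one

section NormedSpace

variable {E : Type*} [SeminormedAddCommGroup E] [NormedSpace ℚ_[p] E]

theorem norm_coe_smul_le (z : ℤ_[p]) (x : E) : ‖(z : ℚ_[p]) • x‖ ≤ ‖x‖ := by
  rw [norm_smul, padic_norm_e_of_padicInt]
  exact mul_le_of_le_one_left (norm_nonneg x) z.norm_le_one

theorem norm_coe_smul_le_norm_p_smul {z : ℤ_[p]} (hz : ‖z‖ < 1) (x : E) :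
    ‖(z : ℚ_[p]) • x‖ ≤ ‖(p : ℚ_[p]) • x‖ := by
  rw [norm_smul, norm_smul, padic_norm_e_of_padicInt, Padic.norm_p]
  exact mul_le_mul_of_nonneg_right (norm_le_inv_of_norm_lt_one hz) (norm_nonneg x)

end NormedSpace

theorem exists_nat_lt_row_sub_mul {ι : Type*} [Fintype ι] [DecidableEq ι]
    {B : Matrix ι ι ℤ_[p]} (hB : IsUnit B.det) {j₀ a b : ι} (hab : a ≠ b) (hj₀ : ‖B j₀ a‖ = 1) :
    ∃ s ≠ j₀, ∃ c < p, ‖B s a - c * B j₀ a‖ < 1 ∧ ‖B s b - c * B j₀ b‖ = 1 := by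
  have hdet : (B.map toZMod).det ≠ 0 := by
    rw [← RingHom.mapMatrix_apply, ← RingHom.map_det]
    exact (hB.map _).ne_zero
  have hu : toZMod (B j₀ a) ≠ 0 := toZMod_ne_zero_iff.2 hj₀
  obtain ⟨s, hs⟩ := Matrix.exists_mul_ne_mul_of_det_ne_zero hdet hab hu
  simp only [Matrix.map_apply] at hs
  set x : ZMod p := toZMod (B s a) / toZMod (B j₀ a)
  refine ⟨s, ?_, x.val, x.val_lt, ?_, ?_⟩
  · rintro rfl
    exact hs rfl
  · rw [← toZMod_eq_zero_iff, map_sub, map_mul, map_natCast, ZMod.natCast_zmod_val,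
      div_mul_cancel₀ _ hu, sub_self]
  · rw [← toZMod_ne_zero_iff, map_sub, map_mul, map_natCast, ZMod.natCast_zmod_val, sub_ne_zero]
    contrapose! hs
    rw [hs, div_mul_eq_mul_div, div_mul_cancel₀ _ hu, mul_comm]

end PadicInt

def padicLattice (p : ℕ) [Fact p.Prime] {E ι : Type*} [AddCommGroup E] [Module ℚ_[p] E]
    [Fintype ι] (v : ι → E) : Set E :=
  Set.range fun a : ι → ℤ_[p] => ∑ i, (a i : ℚ_[p]) • v i

section PadicLattice

variable {p : ℕ} [Fact p.Prime] {E ι : Type*} [Fintype ι]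

section Module

variable [AddCommGroup E] [Module ℚ_[p] E] [DecidableEq ι]

theorem sum_coe_single_smul (v : ι → E) (j : ι) :
    ∑ i, ((Pi.single j 1 : ι → ℤ_[p]) i : ℚ_[p]) • v i = v j := by
  simp [Pi.single_apply, apply_ite (fun z : ℤ_[p] => (z : ℚ_[p]))]

theorem self_mem_padicLattice (v : ι → E) (j : ι) : v j ∈ padicLattice p v :=
  ⟨Pi.single j 1, sum_coe_single_smul v j⟩

theorem exists_isUnit_det_of_padicLattice_eq {α β : ι → E} (hα : LinearIndependent ℚ_[p] α)
    (hlat : padicLattice p α = padicLattice p β) :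
    ∃ B : Matrix ι ι ℤ_[p], IsUnit B.det ∧ ∀ j, ∑ i, (B j i : ℚ_[p]) • α i = β j := by
  have hβα (j : ι) : β j ∈ padicLattice p α := hlat ▸ self_mem_padicLattice β j
  have hαβ (j : ι) : α j ∈ padicLattice p β := hlat ▸ self_mem_padicLattice α j
  choose B hB using hβα
  choose D hD using hαβ
  refine ⟨Matrix.of B, Matrix.isUnit_det_of_left_inverse (B := Matrix.of D) ?_, hB⟩
  have hcoe : (Matrix.of D * Matrix.of B).map PadicInt.Coe.ringHom = 1 := by
    refine hα.eq_one_of_forall_sum_smul_eq fun j => ?_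
    rw [Matrix.map_mul, ← Matrix.sum_smul_sum_smul]
    change ∑ i, (D j i : ℚ_[p]) • ∑ k, (B i k : ℚ_[p]) • α k = α j
    simpa only [hB] using hD j
  exact Matrix.map_injective Subtype.coe_injective <|
    hcoe.trans (map_one (PadicInt.Coe.ringHom.mapMatrix (m := ι))).symm

end Module

section Ultrametric

variable [SeminormedAddCommGroup E] [NormedSpace ℚ_[p] E] [IsUltrametricDist E]

theorem exists_norm_le_of_mem_padicLattice [Nonempty ι] {v : ι → E} {x : E}
    (hx : x ∈ padicLattice p v) : ∃ i, ‖x‖ ≤ ‖v i‖ := by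
  obtain ⟨a, rfl⟩ := hx
  obtain ⟨i, -, hi⟩ := exists_norm_finsetSum_le_of_nonempty univ_nonempty
    fun i => (a i : ℚ_[p]) • v i
  exact ⟨i, hi.trans (PadicInt.norm_coe_smul_le _ _)⟩

theorem exists_norm_eq_of_padicLattice_eq [DecidableEq ι] {α β : ι → E}
    (hlat : padicLattice p α = padicLattice p β) {i₀ : ι} (hi₀ : ∀ i, ‖α i‖ ≤ ‖α i₀‖) :
    ∃ j, ‖β j‖ = ‖α i₀‖ := by
  have : Nonempty ι := ⟨i₀⟩
  obtain ⟨j, hj⟩ := exists_norm_le_of_mem_padicLattice (hlat ▸ self_mem_padicLattice α i₀)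
  obtain ⟨a, ha⟩ : β j ∈ padicLattice p α := hlat ▸ self_mem_padicLattice β j
  refine ⟨j, le_antisymm ?_ hj⟩
  rw [← ha]
  exact norm_sum_le_of_forall_le_of_nonneg (norm_nonneg _) fun i _ =>
    (PadicInt.norm_coe_smul_le _ _).trans (hi₀ i)

end Ultrametric

end PadicLattice

section Orthogonal

variable {p : ℕ} [Fact p.Prime] {E ι : Type*} [SeminormedAddCommGroup E] [NormedSpace ℚ_[p] E]
  [IsUltrametricDist E] [Fintype ι] [LinearOrder ι] {α : ι → E} {a : ι → ℤ_[p]} {j i₀ i₁ : ι}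

theorem norm_sum_coe_smul_le (hα : Antitone fun i => ‖α i‖) (ha : ∀ i < j, ‖a i‖ < 1)
    (hp : ∀ i < j, ‖(p : ℚ_[p]) • α i‖ ≤ ‖α j‖) : ‖∑ i, (a i : ℚ_[p]) • α i‖ ≤ ‖α j‖ := by
  refine norm_sum_le_of_forall_le_of_nonneg (norm_nonneg _) fun i _ => ?_
  rcases lt_or_ge i j with hij | hji
  · exact (PadicInt.norm_coe_smul_le_norm_p_smul (ha i hij) _).trans (hp i hij)
  · exact (PadicInt.norm_coe_smul_le _ _).trans (hα hji)

theorem norm_sum_coe_smul_eq (hα : StrictAnti fun i => ‖α i‖) (ha : ∀ i < j, ‖a i‖ < 1)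
    (haj : ‖a j‖ = 1) (hp : ∀ i < j, ‖(p : ℚ_[p]) • α i‖ < ‖α j‖) :
    ‖∑ i, (a i : ℚ_[p]) • α i‖ = ‖α j‖ := by
  have hj : ‖(a j : ℚ_[p]) • α j‖ = ‖α j‖ := by
    rw [norm_smul, PadicInt.padic_norm_e_of_padicInt, haj, one_mul]
  refine (norm_sum_eq_of_forall_ne_lt (mem_univ j) fun i _ hij => ?_).trans hj
  rw [hj]
  rcases hij.lt_or_gt with hij | hji
  · exact (PadicInt.norm_coe_smul_le_norm_p_smul (ha i hij) _).trans_lt (hp i hij)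
  · exact (PadicInt.norm_coe_smul_le _ _).trans_lt (hα hji)

theorem norm_sum_coe_smul_le_of_norm_lt_one (hα : StrictAnti fun i => ‖α i‖) (hbot : IsBot i₀)
    (hcov : i₀ ⋖ i₁) (hp : ‖(p : ℚ_[p]) • α i₀‖ < ‖α i₁‖) (ha : ‖a i₀‖ < 1) :
    ‖∑ i, (a i : ℚ_[p]) • α i‖ ≤ ‖α i₁‖ :=
  norm_sum_coe_smul_le hα.antitone (fun _ hi => hbot.eq_of_lt_of_covBy hcov hi ▸ ha)
    (fun _ hi => hbot.eq_of_lt_of_covBy hcov hi ▸ hp.le)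

theorem norm_sum_coe_smul_eq_of_covBy (hα : StrictAnti fun i => ‖α i‖) (hbot : IsBot i₀)
    (hcov : i₀ ⋖ i₁) (hp : ‖(p : ℚ_[p]) • α i₀‖ < ‖α i₁‖)
    (ha₀ : ‖a i₀‖ < 1) (ha₁ : ‖a i₁‖ = 1) :
    ‖∑ i, (a i : ℚ_[p]) • α i‖ = ‖α i₁‖ :=
  norm_sum_coe_smul_eq hα (fun _ hi => hbot.eq_of_lt_of_covBy hcov hi ▸ ha₀) ha₁
    (fun _ hi => hbot.eq_of_lt_of_covBy hcov hi ▸ hp)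

theorem norm_sum_coe_smul_lt_iff (hα : StrictAnti fun i => ‖α i‖) (hbot : IsBot i₀)
    (hcov : i₀ ⋖ i₁) (hp : ‖(p : ℚ_[p]) • α i₀‖ < ‖α i₁‖) :
    ‖∑ i, (a i : ℚ_[p]) • α i‖ < ‖α i₀‖ ↔ ‖a i₀‖ < 1 := by
  refine ⟨fun h => (a i₀).norm_le_one.lt_of_ne fun ha => h.ne ?_, fun ha =>
    (norm_sum_coe_smul_le_of_norm_lt_one hα hbot hcov hp ha).trans_lt (hα hcov.lt)⟩
  exact norm_sum_coe_smul_eq hα (fun i hi => absurd hi (hbot i).not_gt) ha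
    (fun i hi => absurd hi (hbot i).not_gt)

theorem isGreatest_norm_sum_coe_smul_lt (hα : StrictAnti fun i => ‖α i‖) (hbot : IsBot i₀)
    (hcov : i₀ ⋖ i₁) (hp : ‖(p : ℚ_[p]) • α i₀‖ < ‖α i₁‖) :
    IsGreatest {r : ℝ | ∃ a : ι → ℤ_[p], ‖∑ i, (a i : ℚ_[p]) • α i‖ = r ∧ r < ‖α i₀‖}
      ‖α i₁‖ := by
  refine ⟨⟨Pi.single i₁ 1, by rw [sum_coe_single_smul], hα hcov.lt⟩, ?_⟩
  rintro r ⟨a, rfl, hr⟩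
  exact norm_sum_coe_smul_le_of_norm_lt_one hα hbot hcov hp
    ((norm_sum_coe_smul_lt_iff hα hbot hcov hp).1 hr)

end Orthogonal

theorem stmt17 {p : ℕ} [Fact p.Prime] {K : Type*} [NormedField K]
    [Algebra ℚ_[p] K] [IsUltrametricDist K]
    (hext : ∀ x : ℚ_[p], ‖algebraMap ℚ_[p] K x‖ = ‖x‖)
    {m : ℕ} (hm : 2 ≤ m) (α β : Fin m → K)
    (hαindep : LinearIndependent ℚ_[p] α)
    (hstrict : ∀ i j : Fin m, i < j → ‖α j‖ < ‖α i‖)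
    (hp : ∀ i : Fin m, ‖(p : ℚ_[p]) • α ⟨0, by omega⟩‖ < ‖α i‖)
    -- β is a basis of the same lattice L(α) = L(β)
    (hlat : (Set.range fun a : Fin m → ℤ_[p] => ∑ i, ((a i : ℚ_[p])) • α i)
          = (Set.range fun a : Fin m → ℤ_[p] => ∑ i, ((a i : ℚ_[p])) • β i)) :
    -- some β has maximal norm λ₁ = |α_1|
    (∃ i : Fin m, ‖β i‖ = ‖α ⟨0, by omega⟩‖) ∧
    -- λ₂ = |α_2| is the largest norm of a lattice vector of norm < λ₁
    IsGreatest
      {r : ℝ | ∃ a : Fin m → ℤ_[p],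
          ‖∑ i, ((a i : ℚ_[p])) • α i‖ = r ∧ r < ‖α ⟨0, by omega⟩‖}
      ‖α ⟨1, by omega⟩‖ ∧
    -- after subtracting a suitable multiple of a maximal-norm β from another β,
    -- one reaches a vector of norm λ₂ = |α_2|
    (∃ (i₀ s : Fin m) (c : ℕ), ‖β i₀‖ = ‖α ⟨0, by omega⟩‖ ∧ s ≠ i₀ ∧ c < p ∧
        ‖β s - ((c : ℚ_[p])) • β i₀‖ = ‖α ⟨1, by omega⟩‖) := by
  let _ : NormedSpace ℚ_[p] K :=
    { norm_smul_le := fun a x => by rw [Algebra.smul_def, norm_mul, hext] }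
  set i₀ : Fin m := ⟨0, by omega⟩
  set i₁ : Fin m := ⟨1, by omega⟩
  have hα : StrictAnti fun i => ‖α i‖ := fun i j h => hstrict i j h
  have hbot : IsBot i₀ := fun i => Nat.zero_le i
  have hcov : i₀ ⋖ i₁ := Fin.covBy_iff.2 (Nat.covBy_iff_add_one_eq.2 rfl)
  have hlat : padicLattice p α = padicLattice p β := hlat
  obtain ⟨B, hBdet, hB⟩ := exists_isUnit_det_of_padicLattice_eq hαindep hlat
  obtain ⟨j₀, hj₀⟩ := exists_norm_eq_of_padicLattice_eq hlat fun i => hα.antitone (hbot i)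
  have hBj₀ : ‖B j₀ i₀‖ = 1 :=
    (B j₀ i₀).norm_le_one.eq_of_not_lt fun hlt =>
      ((norm_sum_coe_smul_lt_iff hα hbot hcov (hp i₁)).2 hlt).ne (by rw [hB j₀, hj₀])
  obtain ⟨s, hs, c, hc, he₀, he₁⟩ := PadicInt.exists_nat_lt_row_sub_mul hBdet hcov.lt.ne hBj₀
  have hcomb : β s - (c : ℚ_[p]) • β j₀ = ∑ k, ((B s k - c * B j₀ k : ℤ_[p]) : ℚ_[p]) • α k := by
    simp only [← hB, smul_sum, ← sum_sub_distrib, smul_smul, ← sub_smul]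
    push_cast
    rfl
  refine ⟨⟨j₀, hj₀⟩, isGreatest_norm_sum_coe_smul_lt hα hbot hcov (hp i₁),
    j₀, s, c, hj₀, hs, hc, ?_⟩
  rw [hcomb]
  exact norm_sum_coe_smul_eq_of_covBy hα hbot hcov (hp i₁) he₀ he₁
end
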